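/- arXiv:1802.10558 — 2 statements merged into one kernel-verified Lean document; each statement's English description precedes it below -/
import Mathlib

section
/- Sufficient decrease of the proximal-gradient step: let f : ℝⁿ → ℝ be differentiable with L-Lipschitz gradient, g : ℝⁿ → ℝ convex, τ > L, and x⁺ a minimizer of u ↦ g(u) + ⟨u − x, ∇f(x)⟩ + (τ/2)‖u − x‖². Then f(x⁺) + g(x⁺) ≤ f(x) + g(x) − ((τ − L)/2)‖x⁺ − x‖². -/
/-!
The descent lemma bounds `f x⁺` by the linearization of `f` at `x` plus `(L/2)‖x⁺ - x‖²`
(integrate the Lipschitz bound on `∇f` along the segment); comparing the value of the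
minimized model at `x⁺` with its value at `u = x` bounds `g x⁺ + ⟪x⁺ - x, ∇f x⟫` by
`g x - (τ/2)‖x⁺ - x‖²`. Adding the two inequalities gives the claim.
-/

open RealInnerProductSpace Set

theorem image_one_le_of_deriv_sub_le {φ φ' : ℝ → ℝ} {M : ℝ}
    (hφ : ∀ t, HasDerivAt φ (φ' t) t) (hbound : ∀ t ∈ Ioo (0 : ℝ) 1, φ' t ≤ φ' 0 + M * t) :
    φ 1 ≤ φ 0 + φ' 0 + M / 2 := by
  let ψ t := φ t - t * φ' 0 - M / 2 * t ^ 2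
  have hψ (t : ℝ) : HasDerivAt ψ (φ' t - φ' 0 - M * t) t := by
    refine (((hφ t).sub ((hasDerivAt_id' t).mul_const (φ' 0))).sub
      ((hasDerivAt_pow 2 t).const_mul (M / 2))).congr_deriv ?_
    norm_num; ring
  have hanti : AntitoneOn ψ (Icc 0 1) := by
    refine antitoneOn_of_hasDerivWithinAt_nonpos (convex_Icc 0 1)
      (fun t _ => (hψ t).continuousAt.continuousWithinAt)
      (fun t _ => (hψ t).hasDerivWithinAt) fun t ht => ?_
    rw [interior_Icc] at ht
    linarith [hbound t ht]
  have := hanti (left_mem_Icc.2 zero_le_one) (right_mem_Icc.2 zero_le_one) zero_le_one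
  simp only [ψ] at this
  linarith

variable {E : Type*} [NormedAddCommGroup E] [InnerProductSpace ℝ E] [CompleteSpace E]

theorem HasGradientAt.hasDerivAt_comp_add_smul {f : E → ℝ} {f' x v : E} {t : ℝ}
    (hf : HasGradientAt f f' (x + t • v)) :
    HasDerivAt (fun s : ℝ => f (x + s • v)) ⟪f', v⟫ t := by
  have hline : HasDerivAt (fun s : ℝ => x + s • v) v t := by
    simpa using ((hasDerivAt_id t).smul_const v).const_add x
  have h := hf.hasFDerivAt.comp_hasDerivAt t hline
  rwa [InnerProductSpace.toDual_apply_apply] at h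

theorem le_add_inner_add_of_gradient_lipschitz {f : E → ℝ} {f' : E → E} {L : ℝ}
    (hf : ∀ x, HasGradientAt f (f' x) x) (hlip : ∀ x y, ‖f' x - f' y‖ ≤ L * ‖x - y‖)
    (x y : E) : f y ≤ f x + ⟪f' x, y - x⟫ + L / 2 * ‖y - x‖ ^ 2 := by
  set v := y - x
  have hderiv (t : ℝ) := (hf (x + t • v)).hasDerivAt_comp_add_smul
  have hbound (t : ℝ) (ht : t ∈ Ioo (0 : ℝ) 1) :
      ⟪f' (x + t • v), v⟫ ≤ ⟪f' (x + (0 : ℝ) • v), v⟫ + L * ‖v‖ ^ 2 * t := by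
    have hstep : ‖f' (x + t • v) - f' x‖ ≤ L * (t * ‖v‖) := by
      simpa [norm_smul, abs_of_pos ht.1] using hlip (x + t • v) x
    calc ⟪f' (x + t • v), v⟫ = ⟪f' x, v⟫ + ⟪f' (x + t • v) - f' x, v⟫ := by
          rw [inner_sub_left]; ring
      _ ≤ ⟪f' x, v⟫ + ‖f' (x + t • v) - f' x‖ * ‖v‖ := by
          gcongr; exact real_inner_le_norm _ _
      _ ≤ ⟪f' x, v⟫ + L * (t * ‖v‖) * ‖v‖ := by gcongr
      _ = ⟪f' (x + (0 : ℝ) • v), v⟫ + L * ‖v‖ ^ 2 * t := by rw [zero_smul, add_zero]; ring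
  simpa [v, div_mul_eq_mul_div, mul_div_assoc] using image_one_le_of_deriv_sub_le hderiv hbound

theorem prox_grad_sufficient_decrease_general (n : ℕ)
    (f g : EuclideanSpace ℝ (Fin n) → ℝ)
    (f' : EuclideanSpace ℝ (Fin n) → EuclideanSpace ℝ (Fin n))
    (hf : ∀ x, HasGradientAt f (f' x) x)
    (L : ℝ)
    (hlip : ∀ x y, ‖f' x - f' y‖ ≤ L * ‖x - y‖)
    (τ : ℝ)
    (x xplus : EuclideanSpace ℝ (Fin n))
    (hmin : ∀ u, g xplus + ⟪xplus - x, f' x⟫ + (τ / 2) * ‖xplus - x‖ ^ 2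
        ≤ g u + ⟪u - x, f' x⟫ + (τ / 2) * ‖u - x‖ ^ 2) :
    f xplus + g xplus ≤ f x + g x - ((τ - L) / 2) * ‖xplus - x‖ ^ 2 := by
  have hdescent := le_add_inner_add_of_gradient_lipschitz hf hlip x xplus
  have hmodel := hmin x
  rw [real_inner_comm] at hdescent
  simp only [sub_self, inner_zero_left, norm_zero] at hmodel
  linarith

/-- Sufficient decrease of the proximal-gradient step: with f
differentiable with L-Lipschitz gradient, g convex, τ > L, and x⁺ a minimizer
of u ↦ g(u) + ⟨u − x, ∇f(x)⟩ + (τ/2)‖u − x‖², we have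
f(x⁺) + g(x⁺) ≤ f(x) + g(x) − ((τ − L)/2)‖x⁺ − x‖². -/
theorem prox_grad_sufficient_decrease (n : ℕ)
    (f g : EuclideanSpace ℝ (Fin n) → ℝ)
    (f' : EuclideanSpace ℝ (Fin n) → EuclideanSpace ℝ (Fin n))
    (hf : ∀ x, HasGradientAt f (f' x) x)
    (L : ℝ) (hL : 0 ≤ L)
    (hlip : ∀ x y, ‖f' x - f' y‖ ≤ L * ‖x - y‖)
    (hg : ConvexOn ℝ Set.univ g)
    (τ : ℝ) (hτ : L < τ)
    (x xplus : EuclideanSpace ℝ (Fin n))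
    (hmin : ∀ u, g xplus + ⟪xplus - x, f' x⟫ + (τ / 2) * ‖xplus - x‖ ^ 2
        ≤ g u + ⟪u - x, f' x⟫ + (τ / 2) * ‖u - x‖ ^ 2) :
    f xplus + g xplus ≤ f x + g x - ((τ - L) / 2) * ‖xplus - x‖ ^ 2 :=
  prox_grad_sufficient_decrease_general n f g f' hf L hlip τ x xplus hmin
end

section
/- For the RBF kernel matrix K with entries K_{ij} = exp(−‖x_i − x_j‖²/(2σ²)), the gradient of J₁(X) = tr(K^{1/2}) with respect to X satisfies ∂J₁/∂X = (2/σ²)(XH − X ⊙ (BH)), where H = (1/2)K^{−1/2} ⊙ K, B is the d×n all-ones matrix, and ⊙ denotes the Hadamard product, assuming K is invertible. -/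
open scoped Matrix
open scoped Classical

attribute [local instance] Matrix.frobeniusNormedAddCommGroup Matrix.frobeniusNormedSpace

section

open scoped ComplexOrder

/-- The positive semidefinite square root of a positive semidefinite matrix
(the definition `Matrix.PosSemidef.sqrt` of the older Mathlib, since removed). -/
noncomputable def Matrix.PosSemidef.sqrt {𝕜 : Type*} [RCLike 𝕜] {n : Type*} [Fintype n]
    [DecidableEq n] {A : Matrix n n 𝕜} (hA : A.PosSemidef) : Matrix n n 𝕜 :=
  hA.1.eigenvectorUnitary.1 * Matrix.diagonal ((↑) ∘ (√·) ∘ hA.1.eigenvalues) *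
    (star hA.1.eigenvectorUnitary : Matrix n n 𝕜)

end

/-- The RBF kernel Gram matrix of the columns of `X`:
`K i j = exp(−‖x_i − x_j‖² / (2σ²))`. -/
noncomputable def rbfKernel {d n : ℕ} (σ : ℝ) (X : Matrix (Fin d) (Fin n) ℝ) :
    Matrix (Fin n) (Fin n) ℝ :=
  fun i j => Real.exp (-(∑ a, (X a i - X a j) ^ 2) / (2 * σ ^ 2))

/-- `tr(K^{1/2})` for a positive semidefinite matrix `K` (and `0` otherwise). -/
noncomputable def traceSqrt {n : ℕ} (K : Matrix (Fin n) (Fin n) ℝ) : ℝ :=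
  if h : K.PosSemidef then h.sqrt.trace else 0

/-- The linear functional `V ↦ Σ_{i,j} G_{ij} V_{ij} = tr(Gᵀ V)` (Frobenius pairing),
as a continuous linear map; a matrix `G` is the gradient of a functional `J` at `X`
precisely when this map is the Fréchet derivative of `J` at `X`. -/
noncomputable def frobPairing {d n : ℕ} (G : Matrix (Fin d) (Fin n) ℝ) :
    Matrix (Fin d) (Fin n) ℝ →L[ℝ] ℝ :=
  LinearMap.toContinuousLinearMap
    { toFun := fun V => ∑ i, ∑ j, G i j * V i j
      map_add' := by
        intro V W
        simp [mul_add, Finset.sum_add_distrib]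
      map_smul' := by
        intro c V
        simp [Finset.mul_sum, Matrix.smul_apply, mul_left_comm] }

/-!
Near a positive definite `K`, the square root is a local inverse of `C ↦ C * C` at
`A = K^{1/2}`. The derivative of that map at `A` is the Sylvester operator `H ↦ A H + H A`,
which is invertible because `A` is positive definite, so the inverse function theorem gives
`d tr(K^{1/2})[M] = tr((A · + · A)⁻¹ M) = ½ tr(A⁻¹ M)`. The local inverse agrees with the
positive square root on symmetric matrices: a symmetric square root close to `A` is positive
definite. Composing with the derivative `K ⊙ (−σ⁻² ⟨x_i − x_j, v_i − v_j⟩)` of the RBF kernel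
and symmetrizing the double sum over the symmetric weights `H = ½ K^{-1/2} ⊙ K` gives
`(2/σ²)(XH − X ⊙ (BH))`.
-/

open Filter Topology

namespace Matrix

variable {m : Type*} [Fintype m]

theorem PosDef.eventually_posDef_of_isHermitian {A : Matrix m m ℝ} (hA : A.PosDef) :
    ∀ᶠ C in 𝓝 A, C.IsHermitian → C.PosDef := by
  have hcont : Continuous fun p : Matrix m m ℝ × (m → ℝ) => p.2 ⬝ᵥ p.1 *ᵥ p.2 :=
    continuous_snd.dotProduct (continuous_fst.matrix_mulVec continuous_snd)
  have hsphere : ∀ᶠ C in 𝓝 A, ∀ u ∈ Metric.sphere (0 : m → ℝ) 1, 0 < u ⬝ᵥ C *ᵥ u :=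
    (isCompact_sphere 0 1).eventually_forall_of_forall_eventually fun u hu =>
      hcont.continuousAt.eventually (lt_mem_nhds (by
        simpa using hA.dotProduct_mulVec_pos (ne_zero_of_mem_sphere one_ne_zero ⟨u, hu⟩)))
  filter_upwards [hsphere] with C hC hCherm
  refine .of_dotProduct_mulVec_pos hCherm fun x hx => ?_
  have hnorm : 0 < ‖x‖ := norm_pos_iff.mpr hx
  have hu := hC (‖x‖⁻¹ • x) (by simp [norm_smul, hnorm.ne'])
  rw [mulVec_smul, dotProduct_smul, smul_dotProduct, smul_eq_mul, smul_eq_mul] at hu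
  simpa using pos_of_mul_pos_right (pos_of_mul_pos_right hu (by positivity)) (by positivity)

theorem PosDef.eq_zero_of_mul_add_mul_eq_zero {A H : Matrix m m ℝ} (hA : A.PosDef)
    (h : A * H + H * A = 0) : H = 0 := by
  have htrace : (Hᴴ * A * H).trace + (H * A * Hᴴ).trace = 0 := by
    have := congrArg (fun M => (Hᴴ * M).trace) h
    simp only [Matrix.mul_add, trace_add, Matrix.mul_zero, trace_zero] at this
    rwa [← Matrix.mul_assoc, ← Matrix.mul_assoc, Matrix.mul_assoc Hᴴ H, trace_mul_comm Hᴴ] at this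
  have hnonneg₁ := (hA.posSemidef.conjTranspose_mul_mul_same H).trace_nonneg
  have hnonneg₂ := (hA.posSemidef.mul_mul_conjTranspose_same H).trace_nonneg
  have hzero : Hᴴ * A * H = 0 :=
    (hA.posSemidef.conjTranspose_mul_mul_same H).trace_eq_zero_iff.mp (by linarith)
  refine ext_iff_mulVec.mpr fun x => ?_
  by_contra hx
  have hpos := hA.dotProduct_mulVec_pos (x := H *ᵥ x) (by simpa using hx)
  rw [star_mulVec, ← dotProduct_mulVec, mulVec_mulVec, mulVec_mulVec,
    hzero, zero_mulVec, dotProduct_zero] at hpos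
  exact hpos.false

variable [DecidableEq m]

section Sqrt

open scoped MatrixOrder

lemma PosSemidef.sqrt_eq_cfcSqrt {A : Matrix m m ℝ} (hA : A.PosSemidef) :
    hA.sqrt = CFC.sqrt A := by
  rw [CFC.sqrt_eq_real_sqrt A hA.nonneg, cfcₙ_eq_cfc, hA.1.cfc_eq, IsHermitian.cfc,
    Unitary.conjStarAlgAut_apply]
  rfl

lemma PosSemidef.sqrt_mul_self {A : Matrix m m ℝ} (hA : A.PosSemidef) :
    hA.sqrt * hA.sqrt = A := by
  rw [hA.sqrt_eq_cfcSqrt, CFC.sqrt_mul_sqrt_self A hA.nonneg]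

lemma PosSemidef.eq_sqrt_of_mul_self_eq {A B : Matrix m m ℝ} (hA : A.PosSemidef)
    (hB : B.PosSemidef) (h : B * B = A) : B = hA.sqrt := by
  rw [hA.sqrt_eq_cfcSqrt]
  exact (CFC.sqrt_unique h hB.nonneg).symm

lemma PosDef.posDef_sqrt {A : Matrix m m ℝ} (hA : A.PosDef) : hA.posSemidef.sqrt.PosDef := by
  rw [hA.posSemidef.sqrt_eq_cfcSqrt]
  exact isStrictlyPositive_iff_posDef.mp hA.isStrictlyPositive.sqrt

end Sqrt

noncomputable def PosDef.sylvesterEquiv {A : Matrix m m ℝ} (hA : A.PosDef) :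
    Matrix m m ℝ ≃L[ℝ] Matrix m m ℝ :=
  (LinearEquiv.ofInjectiveEndo (LinearMap.mulLeft ℝ A + LinearMap.mulRight ℝ A)
    ((injective_iff_map_eq_zero _).mpr fun _ => hA.eq_zero_of_mul_add_mul_eq_zero))
    |>.toContinuousLinearEquiv

theorem PosDef.hasStrictFDerivAt_mul_self {A : Matrix m m ℝ} (hA : A.PosDef) :
    HasStrictFDerivAt (fun C : Matrix m m ℝ => C * C)
      (hA.sylvesterEquiv : Matrix m m ℝ →L[ℝ] _) A :=
  ((LinearMap.mul ℝ (Matrix m m ℝ)).toContinuousBilinearMap.hasStrictFDerivAt_of_bilinear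
    (hasStrictFDerivAt_id A) (hasStrictFDerivAt_id A)).congr_fderiv (by ext H : 1; rfl)

theorem PosDef.trace_sylvesterEquiv_symm {A : Matrix m m ℝ} (hA : A.PosDef) (M : Matrix m m ℝ) :
    (hA.sylvesterEquiv.symm M).trace = (A⁻¹ * M).trace / 2 := by
  set H := hA.sylvesterEquiv.symm M
  have hM : A * H + H * A = M := hA.sylvesterEquiv.apply_symm_apply M
  have hA' : IsUnit A.det := hA.isUnit.map detMonoidHom
  have : (A⁻¹ * (H * A)).trace = H.trace := by
    rw [trace_mul_comm, Matrix.mul_assoc, mul_nonsing_inv A hA', Matrix.mul_one]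
  rw [← hM, Matrix.mul_add, ← Matrix.mul_assoc, nonsing_inv_mul A hA', Matrix.one_mul,
    trace_add, this]
  ring

theorem PosDef.exists_hasStrictFDerivAt_sqrt {K : Matrix m m ℝ} (hK : K.PosDef) :
    ∃ g : Matrix m m ℝ → Matrix m m ℝ,
      HasStrictFDerivAt g (hK.posDef_sqrt.sylvesterEquiv.symm : Matrix m m ℝ →L[ℝ] _) K ∧
      ∀ᶠ K' in 𝓝 K, K'.IsHermitian → ∃ hK' : K'.PosSemidef, g K' = hK'.sqrt := by
  have hA := hK.posDef_sqrt
  have hsq := hA.hasStrictFDerivAt_mul_self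
  have hderiv := hsq.to_localInverse
  have hg := hsq.localInverse_tendsto
  have hright := hsq.eventually_right_inverse
  simp only [hK.posSemidef.sqrt_mul_self] at hderiv hg hright
  refine ⟨_, hderiv, ?_⟩
  set g := hsq.localInverse _ _ _
  set A := hK.posSemidef.sqrt
  have hgH : Tendsto (fun K' => (g K')ᴴ) (𝓝 K) (𝓝 A) := by
    have h := hg.star
    simp only [star_eq_conjTranspose, hA.1.eq] at h
    exact h
  filter_upwards [hright, hgH.eventually hsq.eventually_left_inverse,
    hg.eventually hA.eventually_posDef_of_isHermitian] with K' hright hleft hpd hK'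
  -- `(g K')ᴴ` is another square root of `K'` near `A`, so local injectivity makes `g K'` Hermitian
  have hgK' : (g K')ᴴ = g K' := by
    rw [← hleft]
    simp only [← conjTranspose_mul, hright, hK'.eq]
    rfl
  have hpsd : K'.PosSemidef := by
    rw [← hright]
    nth_rewrite 1 [← hgK']
    exact posSemidef_conjTranspose_mul_self _
  exact ⟨hpsd, hpsd.eq_sqrt_of_mul_self_eq (hpd hgK').posSemidef hright⟩

end Matrix

theorem HasFDerivAt.traceSqrt {E : Type*} [NormedAddCommGroup E] [NormedSpace ℝ E] {n : ℕ}
    {F : E → Matrix (Fin n) (Fin n) ℝ} {F' : E →L[ℝ] Matrix (Fin n) (Fin n) ℝ} {x : E}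
    (hF : HasFDerivAt F F' x) (hF_herm : ∀ᶠ y in 𝓝 x, (F y).IsHermitian) (hx : (F x).PosDef) :
    HasFDerivAt (fun y => traceSqrt (F y))
      ((Matrix.traceLinearMap (Fin n) ℝ ℝ).toContinuousLinearMap ∘L
        (hx.posDef_sqrt.sylvesterEquiv.symm : Matrix (Fin n) (Fin n) ℝ →L[ℝ] _) ∘L F') x := by
  obtain ⟨g, hg, hg_sqrt⟩ := hx.exists_hasStrictFDerivAt_sqrt
  refine ((Matrix.traceLinearMap (Fin n) ℝ ℝ).toContinuousLinearMap.hasFDerivAt.comp x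
    (hg.hasFDerivAt.comp x hF)).congr_of_eventuallyEq ?_
  filter_upwards [hF.continuousAt.eventually hg_sqrt, hF_herm] with y hy hy_herm
  obtain ⟨hpsd, hgy⟩ := hy hy_herm
  simp [_root_.traceSqrt, dif_pos hpsd, hgy]

theorem isSymm_rbfKernel {d n : ℕ} (σ : ℝ) (X : Matrix (Fin d) (Fin n) ℝ) :
    (rbfKernel σ X).IsSymm := by
  refine Matrix.IsSymm.ext fun i j => ?_
  simp only [rbfKernel]
  congr 4 with a
  ring

theorem exists_hasFDerivAt_rbfKernel {d n : ℕ} (σ : ℝ) (X : Matrix (Fin d) (Fin n) ℝ) :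
    ∃ K' : Matrix (Fin d) (Fin n) ℝ →L[ℝ] Matrix (Fin n) (Fin n) ℝ,
      HasFDerivAt (rbfKernel σ) K' X ∧ ∀ V, K' V = rbfKernel σ X ⊙
        Matrix.of fun i j => -(σ ^ 2)⁻¹ * ∑ a, (X a i - X a j) * (V a i - V a j) := by
  -- Entries are differentiated on `Fin d → Fin n → ℝ` and transported along `Matrix.of`, which
  -- keeps the Frobenius instances of the local `NormedAddCommGroup` out of the computation.
  have hentry (i j : Fin n) : ∃ L : (Fin d → Fin n → ℝ) →L[ℝ] ℝ,
      HasFDerivAt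
        (fun y : Fin d → Fin n → ℝ => Real.exp (-(∑ a, (y a i - y a j) ^ 2) / (2 * σ ^ 2)))
        L (Matrix.of.symm X) ∧
      ∀ v, L v = rbfKernel σ X i j * (-(σ ^ 2)⁻¹ * ∑ a, (X a i - X a j) * (v a i - v a j)) := by
    let entry (a : Fin d) (i : Fin n) : (Fin d → Fin n → ℝ) →L[ℝ] ℝ :=
      (ContinuousLinearMap.proj i : (Fin n → ℝ) →L[ℝ] ℝ) ∘L ContinuousLinearMap.proj a
    have hdiff (a : Fin d) : HasFDerivAt (fun y : Fin d → Fin n → ℝ => y a i - y a j)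
        (entry a i - entry a j) (Matrix.of.symm X) :=
      (entry a i - entry a j).hasFDerivAt
    have h := ((HasFDerivAt.fun_sum (u := Finset.univ) fun a _ => (hdiff a).pow 2).fun_neg
      |>.mul_const (2 * σ ^ 2)⁻¹).exp
    refine ⟨_, by simpa only [div_eq_mul_inv] using h, fun v => ?_⟩
    simp [entry, rbfKernel, Finset.mul_sum, div_eq_mul_inv]
    exact Finset.sum_congr rfl fun a _ => by ring
  choose L hL hL_apply using hentry
  let e : (Fin n → Fin n → ℝ) ≃L[ℝ] Matrix (Fin n) (Fin n) ℝ :=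
    (Matrix.ofLinearEquiv ℝ).toContinuousLinearEquiv
  let e' : (Fin d → Fin n → ℝ) ≃L[ℝ] Matrix (Fin d) (Fin n) ℝ :=
    (Matrix.ofLinearEquiv ℝ).toContinuousLinearEquiv
  refine ⟨(e : _ →L[ℝ] _) ∘L (.pi fun i => .pi fun j => L i j) ∘L (e'.symm : _ →L[ℝ] _), ?_,
    fun V => ?_⟩
  · exact e.hasFDerivAt.comp X
      ((hasFDerivAt_pi.mpr fun i => hasFDerivAt_pi.mpr fun j => hL i j).comp X e'.symm.hasFDerivAt)
  · ext i j
    simp [e, e', hL_apply]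

theorem frobPairing_smul_apply {d n : ℕ} (c : ℝ) (G V : Matrix (Fin d) (Fin n) ℝ) :
    frobPairing (c • G) V = c * frobPairing G V := by
  simp [frobPairing, Finset.mul_sum, mul_assoc]

theorem Matrix.IsSymm.sum_mul_inner_sub_sub {d n : ℕ} {W : Matrix (Fin n) (Fin n) ℝ}
    (hW : W.IsSymm) (X V : Matrix (Fin d) (Fin n) ℝ) :
    ∑ i, ∑ j, W i j * ∑ a, (X a i - X a j) * (V a i - V a j) =
      2 * ∑ i, ∑ j, W i j * ∑ a, (X a i - X a j) * V a i := by
  have hswap : ∑ i, ∑ j, W i j * ∑ a, (X a i - X a j) * V a j =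
      -∑ i, ∑ j, W i j * ∑ a, (X a i - X a j) * V a i := by
    rw [Finset.sum_comm, ← Finset.sum_neg_distrib]
    refine Finset.sum_congr rfl fun i _ => ?_
    rw [← Finset.sum_neg_distrib]
    refine Finset.sum_congr rfl fun j _ => ?_
    rw [hW.apply i j, ← mul_neg, ← Finset.sum_neg_distrib]
    congr 1
    exact Finset.sum_congr rfl fun a _ => by ring
  simp only [mul_sub, Finset.sum_sub_distrib, hswap]
  ring

theorem frobPairing_mul_sub_hadamard {d n : ℕ} {W : Matrix (Fin n) (Fin n) ℝ} (hW : W.IsSymm)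
    (X V : Matrix (Fin d) (Fin n) ℝ) :
    frobPairing (X * W - X ⊙ ((Matrix.of fun _ _ => 1 : Matrix (Fin d) (Fin n) ℝ) * W)) V =
      -(∑ i, ∑ j, W i j * ∑ a, (X a i - X a j) * (V a i - V a j)) / 2 := by
  calc frobPairing (X * W - X ⊙ ((Matrix.of fun _ _ => 1 : Matrix (Fin d) (Fin n) ℝ) * W)) V
      = ∑ a, ∑ i, ∑ j, W i j * ((X a j - X a i) * V a i) := by
        simp only [frobPairing, LinearMap.coe_toContinuousLinearMap', LinearMap.coe_mk,
          AddHom.coe_mk, Matrix.sub_apply, Matrix.mul_apply, Matrix.hadamard_apply,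
          Matrix.of_apply, one_mul, Finset.mul_sum, ← Finset.sum_sub_distrib, Finset.sum_mul]
        refine Finset.sum_congr rfl fun a _ => Finset.sum_congr rfl fun i _ =>
          Finset.sum_congr rfl fun j _ => ?_
        rw [hW.apply j i]
        ring
    _ = ∑ i, ∑ j, ∑ a, W i j * ((X a j - X a i) * V a i) := by
        rw [Finset.sum_comm]
        exact Finset.sum_congr rfl fun i _ => Finset.sum_comm
    _ = -(∑ i, ∑ j, W i j * ∑ a, (X a i - X a j) * (V a i - V a j)) / 2 := by
        rw [hW.sum_mul_inner_sub_sub, neg_div, mul_div_cancel_left₀ _ two_ne_zero]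
        simp only [Finset.mul_sum, ← Finset.sum_neg_distrib]
        exact Finset.sum_congr rfl fun i _ => Finset.sum_congr rfl fun j _ =>
          Finset.sum_congr rfl fun a _ => by ring

theorem gradient_trace_sqrt_rbf_general {d n : ℕ} (σ : ℝ)
    (X : Matrix (Fin d) (Fin n) ℝ)
    (hK : (rbfKernel σ X).PosDef) :
    HasFDerivAt (fun Y : Matrix (Fin d) (Fin n) ℝ => traceSqrt (rbfKernel σ Y))
      (frobPairing
        ((2 / σ ^ 2) •
          (X * ((1 / 2 : ℝ) • ((hK.posSemidef.sqrt)⁻¹ ⊙ rbfKernel σ X))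
            - X ⊙ ((Matrix.of fun _ _ => (1 : ℝ) : Matrix (Fin d) (Fin n) ℝ)
                * ((1 / 2 : ℝ) • ((hK.posSemidef.sqrt)⁻¹ ⊙ rbfKernel σ X))))))
      X := by
  obtain ⟨K', hK', hK'_apply⟩ := exists_hasFDerivAt_rbfKernel σ X
  have hK_herm (Y : Matrix (Fin d) (Fin n) ℝ) : (rbfKernel σ Y).IsHermitian :=
    Matrix.isHermitian_iff_isSymm.mpr (isSymm_rbfKernel σ Y)
  refine (hK'.traceSqrt (.of_forall hK_herm) hK).congr_fderiv
    (ContinuousLinearMap.ext fun V => ?_)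
  -- restating the goal makes `frobPairing _ V` use the coercion of `frobPairing`'s own type
  -- instead of the one of the Frobenius-normed space, so that the lemmas below apply
  show (hK.posDef_sqrt.sylvesterEquiv.symm (K' V)).trace = frobPairing _ V
  have hW : ((hK.posSemidef.sqrt)⁻¹ ⊙ rbfKernel σ X).IsSymm :=
    Matrix.isHermitian_iff_isSymm.mp (hK.posDef_sqrt.inv.isHermitian.hadamard (hK_herm X))
  rw [Matrix.mul_smul, Matrix.mul_smul, Matrix.hadamard_smul, ← smul_sub]
  simp only [frobPairing_smul_apply, frobPairing_mul_sub_hadamard hW]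
  have hK'V : (K' V)ᵀ = K' V := by
    ext i j
    simp only [Matrix.transpose_apply, hK'_apply, Matrix.hadamard_apply, Matrix.of_apply,
      (isSymm_rbfKernel σ X).apply]
    congr 2
    exact Finset.sum_congr rfl fun a _ => by ring
  rw [Matrix.PosDef.trace_sylvesterEquiv_symm, ← hK'V, ← Matrix.sum_hadamard_eq, hK'_apply,
    ← Matrix.hadamard_assoc]
  simp only [Matrix.hadamard_apply, Matrix.of_apply, mul_left_comm _ (-(σ ^ 2)⁻¹),
    ← Finset.mul_sum]
  ring

/-- for the RBF kernel matrix `K(X)` (assumed positive definite),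
the gradient of `J₁(X) = tr(K(X)^{1/2})` is
`(2/σ²)(XH − X ⊙ (BH))` with `H = (1/2) K^{−1/2} ⊙ K` and `B` the all-ones matrix. -/
theorem gradient_trace_sqrt_rbf {d n : ℕ} (σ : ℝ) (hσ : 0 < σ)
    (X : Matrix (Fin d) (Fin n) ℝ)
    (hK : (rbfKernel σ X).PosDef) :
    HasFDerivAt (fun Y : Matrix (Fin d) (Fin n) ℝ => traceSqrt (rbfKernel σ Y))
      (frobPairing
        ((2 / σ ^ 2) •
          (X * ((1 / 2 : ℝ) • ((hK.posSemidef.sqrt)⁻¹ ⊙ rbfKernel σ X))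
            - X ⊙ ((Matrix.of fun _ _ => (1 : ℝ) : Matrix (Fin d) (Fin n) ℝ)
                * ((1 / 2 : ℝ) • ((hK.posSemidef.sqrt)⁻¹ ⊙ rbfKernel σ X))))))
      X :=
  gradient_trace_sqrt_rbf_general σ X hK
end
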